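/- For the first-order IMEX scheme applied to the macro-micro system with exact spatial and angular discretizations, if the implicit relation ε²(g^{n+1} − g^n) + ε Δt (I−Π)(∇_x·(Ω g^n)) + Δt ∇_x·(Ω ρ^{n+1}) + Δt σ_s g^{n+1} + ε² Δt σ_a g^n = 0 holds with g^n, g^{n+1} and their derivatives bounded uniformly in ε, then in the limit ε → 0 we obtain g^{n+1} = −(1/σ_s) ∇_x·(Ω ρ^{n+1}). -/
import Mathlib


open Filter Topology

/-- For the first-order IMEX scheme, if the implicit relation
`ε²(g^{n+1} − g^n) + ε Δt (I−Π)(∇_x·(Ω g^n)) + Δt ∇_x·(Ω ρ^{n+1}) + Δt σ_s g^{n+1}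
 + ε² Δt σ_a g^n = 0` holds with all quantities bounded uniformly in `ε`, then as
`ε → 0⁺` we obtain `g^{n+1} = −(1/σ_s) ∇_x·(Ω ρ^{n+1})`. -/
theorem imex_first_order_ap_limit
    {V : Type*} [NormedAddCommGroup V] [NormedSpace ℝ V]
    (Δt σs σa : ℝ) (hΔt : 0 < Δt) (hσs : 0 < σs) (hσa : 0 ≤ σa)
    (gn g1 P Agn Dρ : ℝ → V) (d : V)
    (hbdd : ∃ C : ℝ, ∀ ε ∈ Set.Ioi (0 : ℝ),
      ‖gn ε‖ ≤ C ∧ ‖g1 ε‖ ≤ C ∧ ‖P ε‖ ≤ C ∧ ‖Agn ε‖ ≤ C)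
    (hDρ : Tendsto Dρ (nhdsWithin 0 (Set.Ioi (0 : ℝ))) (nhds d))
    (hrel : ∀ ε ∈ Set.Ioi (0 : ℝ),
      ε ^ 2 • (g1 ε - gn ε) + (ε * Δt) • P ε + Δt • Dρ ε
        + (Δt * σs) • g1 ε + (ε ^ 2 * Δt * σa) • gn ε = 0) :
    Tendsto g1 (nhdsWithin 0 (Set.Ioi (0 : ℝ))) (nhds ((-(1 / σs)) • d)) := by
  obtain ⟨C, hC⟩ := hbdd
  set l := nhdsWithin (0 : ℝ) (Set.Ioi 0) with hl
  have hmem : ∀ᶠ ε in l, ε ∈ Set.Ioi (0 : ℝ) := self_mem_nhdsWithin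
  have hne : ∀ ε : ℝ, ε ^ 2 + Δt * σs ≠ 0 := by intro ε; positivity
  have heq : ∀ᶠ ε in l, g1 ε =
      (ε ^ 2 + Δt * σs)⁻¹ •
        (ε ^ 2 • gn ε - (ε * Δt) • P ε - Δt • Dρ ε - (ε ^ 2 * Δt * σa) • gn ε) := by
    filter_upwards [hmem] with ε hε
    have h := hrel ε hε
    have h2 : (ε ^ 2 + Δt * σs) • g1 ε =
        ε ^ 2 • gn ε - (ε * Δt) • P ε - Δt • Dρ ε - (ε ^ 2 * Δt * σa) • gn ε := by
      linear_combination (norm := module) h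
    rw [← h2, inv_smul_smul₀ (hne ε)]
  -- auxiliary: scalar → 0 times bounded family → 0
  have haux : ∀ s : ℝ → ℝ, Tendsto s l (nhds 0) →
      ∀ f : ℝ → V, (∀ ε ∈ Set.Ioi (0 : ℝ), ‖f ε‖ ≤ C) →
      Tendsto (fun ε => s ε • f ε) l (nhds 0) := by
    intro s hs f hf
    have hb : ∀ᶠ ε in l, ‖s ε • f ε‖ ≤ |s ε| * max C 0 := by
      filter_upwards [hmem] with ε hε
      rw [norm_smul, Real.norm_eq_abs]
      exact mul_le_mul_of_nonneg_left ((hf ε hε).trans (le_max_left _ _)) (abs_nonneg _)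
    have habs : Tendsto (fun ε => |s ε| * max C 0) l (nhds 0) := by
      simpa using hs.abs.mul_const (max C 0)
    exact squeeze_zero_norm' hb habs
  have h1 : Tendsto (fun ε => (ε : ℝ) ^ 2 • gn ε) l (nhds 0) := by
    refine haux _ ?_ _ (fun ε hε => (hC ε hε).1)
    have : Tendsto (fun ε : ℝ => ε ^ 2) (nhds 0) (nhds ((0:ℝ) ^ 2)) :=
      (continuous_pow 2).tendsto 0
    simpa using this.mono_left nhdsWithin_le_nhds
  have h2 : Tendsto (fun ε => (ε * Δt) • P ε) l (nhds 0) := by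
    refine haux _ ?_ _ (fun ε hε => (hC ε hε).2.2.1)
    have : Tendsto (fun ε : ℝ => ε * Δt) (nhds 0) (nhds (0 * Δt)) :=
      (continuous_id.mul continuous_const).tendsto 0
    simpa using this.mono_left nhdsWithin_le_nhds
  have h3 : Tendsto (fun ε => Δt • Dρ ε) l (nhds (Δt • d)) := hDρ.const_smul Δt
  have h4 : Tendsto (fun ε => (ε ^ 2 * Δt * σa) • gn ε) l (nhds 0) := by
    refine haux _ ?_ _ (fun ε hε => (hC ε hε).1)
    have : Tendsto (fun ε : ℝ => ε ^ 2 * Δt * σa) (nhds 0) (nhds (0 ^ 2 * Δt * σa)) :=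
      (((continuous_pow 2).mul continuous_const).mul continuous_const).tendsto 0
    simpa using this.mono_left nhdsWithin_le_nhds
  have hscal : Tendsto (fun ε : ℝ => (ε ^ 2 + Δt * σs)⁻¹) l (nhds ((Δt * σs)⁻¹)) := by
    have hcont : Tendsto (fun ε : ℝ => ε ^ 2 + Δt * σs) (nhds 0)
        (nhds ((0:ℝ) ^ 2 + Δt * σs)) :=
      ((continuous_pow 2).add continuous_const).tendsto 0
    have := (hcont.mono_left (nhdsWithin_le_nhds : l ≤ nhds 0)).inv₀ (by positivity)
    simpa using this
  have hvec : Tendsto (fun ε => ε ^ 2 • gn ε - (ε * Δt) • P ε - Δt • Dρ ε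
      - (ε ^ 2 * Δt * σa) • gn ε) l (nhds (-(Δt • d))) := by
    have := ((h1.sub h2).sub h3).sub h4
    simpa using this
  have := hscal.smul hvec
  have hfin : Tendsto (fun ε => (ε ^ 2 + Δt * σs)⁻¹ •
      (ε ^ 2 • gn ε - (ε * Δt) • P ε - Δt • Dρ ε - (ε ^ 2 * Δt * σa) • gn ε)) l
      (nhds ((-(1 / σs)) • d)) := by
    convert this using 2
    rw [smul_neg, smul_smul, ← neg_smul]
    congr 1
    have h1 : Δt ≠ 0 := hΔt.ne'
    have h2 : σs ≠ 0 := hσs.ne'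
    field_simp
  exact hfin.congr' (heq.mono fun ε h => h.symm)
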